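/- arXiv:2011.02118 — 8 statements merged into one kernel-verified Lean document; each statement's English description precedes it below -/
import Mathlib

section
/- Let p be an odd prime, a an integer with p ∤ a, and d an integer with p ∤ d. Then there exist integers x₀, y₁ such that x₀² − a·y₁² ≡ d (mod p²), and moreover at least one of x₀, y₁ is not divisible by p. -/
theorem stmt_1 (p : ℕ) (hp : p.Prime) (hodd : Odd p) (a d : ℤ)
    (ha : ¬ (p : ℤ) ∣ a) (hd : ¬ (p : ℤ) ∣ d) :
    ∃ x₀ y₁ : ℤ, x₀ ^ 2 - a * y₁ ^ 2 ≡ d [ZMOD (p : ℤ) ^ 2] ∧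
      (¬ (p : ℤ) ∣ x₀ ∨ ¬ (p : ℤ) ∣ y₁) := by
  haveI : Fact p.Prime := ⟨hp⟩
  have hP : Prime (p : ℤ) := Int.prime_iff_natAbs_prime.mpr (by simpa using hp)
  have hp2 : ¬ (p : ℤ) ∣ 2 := by
    intro h
    have h2 : p ∣ 2 := by exact_mod_cast h
    have := (Nat.prime_dvd_prime_iff_eq hp Nat.prime_two).mp h2
    subst this
    simp [Nat.odd_iff] at hodd
  -- base solution mod p
  have hA : (a : ZMod p) ≠ 0 := by
    rwa [Ne, ZMod.intCast_zmod_eq_zero_iff_dvd]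
  obtain ⟨X, Y, hXY⟩ :
      ∃ X Y : ZMod p, X ^ 2 - (a : ZMod p) * Y ^ 2 = (d : ZMod p) := by
    have hcard : Fintype.card (ZMod p) % 2 = 1 := by
      rw [ZMod.card]; exact Nat.odd_iff.mp hodd
    obtain ⟨X, Y, h⟩ := FiniteField.exists_root_sum_quadratic
      (f := (Polynomial.X : Polynomial (ZMod p)) ^ 2)
      (g := Polynomial.C (-(a : ZMod p)) * Polynomial.X ^ 2 + Polynomial.C 0 * Polynomial.X
        + Polynomial.C (-(d : ZMod p)))
      (Polynomial.degree_X_pow 2) (Polynomial.degree_quadratic (neg_ne_zero.mpr hA)) hcard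
    refine ⟨X, Y, ?_⟩
    simp only [Polynomial.eval_add, Polynomial.eval_mul, Polynomial.eval_pow,
      Polynomial.eval_X, Polynomial.eval_C] at h
    linear_combination h
  set x : ℤ := (X.val : ℤ) with hxdef
  set y : ℤ := (Y.val : ℤ) with hydef
  have hmod : (p : ℤ) ∣ x ^ 2 - a * y ^ 2 - d := by
    rw [← ZMod.intCast_zmod_eq_zero_iff_dvd]
    push_cast [hxdef, hydef, ZMod.natCast_val, ZMod.cast_id]
    rw [sub_eq_zero]
    exact hXY
  obtain ⟨c, hc⟩ := hmod
  have hxy : ¬ (p : ℤ) ∣ x ∨ ¬ (p : ℤ) ∣ y := by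
    by_contra h
    push_neg at h
    apply hd
    have h1 : (p : ℤ) ∣ x ^ 2 - a * y ^ 2 - d := ⟨c, hc⟩
    have hx2 : (p : ℤ) ∣ x ^ 2 := Dvd.dvd.pow h.1 two_ne_zero
    have hy2 : (p : ℤ) ∣ a * y ^ 2 := Dvd.dvd.mul_left (Dvd.dvd.pow h.2 two_ne_zero) a
    have := (dvd_sub hx2 hy2).sub h1
    simpa using this
  rcases hxy with hx | hy
  · -- adjust x : x' = x + p * (-(v*c))
    have hcop : IsCoprime (p : ℤ) (2 * x) := by
      rw [hP.coprime_iff_not_dvd]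
      intro h
      rcases hP.dvd_mul.mp h with h | h
      exacts [hp2 h, hx h]
    obtain ⟨u, v, huv⟩ := hcop
    refine ⟨x + p * (-(v * c)), y, ?_, Or.inl ?_⟩
    · rw [Int.modEq_iff_dvd]
      exact ⟨-(c * u + (-(v * c)) ^ 2), by linear_combination -hc + (p : ℤ) * c * huv⟩
    · intro h
      have hpt : (p : ℤ) ∣ p * (-(v * c)) := Dvd.intro _ rfl
      exact hx (by simpa using h.sub hpt)
  · -- adjust y : y' = y + p * (v*c)
    have hcop : IsCoprime (p : ℤ) (2 * a * y) := by
      rw [hP.coprime_iff_not_dvd]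
      intro h
      rcases hP.dvd_mul.mp h with h | h
      · rcases hP.dvd_mul.mp h with h | h
        exacts [hp2 h, ha h]
      · exact hy h
    obtain ⟨u, v, huv⟩ := hcop
    refine ⟨x, y + p * (v * c), ?_, Or.inr ?_⟩
    · rw [Int.modEq_iff_dvd]
      exact ⟨a * (v * c) ^ 2 - c * u, by linear_combination -hc + (p : ℤ) * c * huv⟩
    · intro h
      have hpt : (p : ℤ) ∣ p * (v * c) := Dvd.intro _ rfl
      exact hy (by simpa using h.sub hpt)
end

section
/- Let p be an odd prime, and let a, b, d be integers with p ∤ a, p ∣ b, p² ∤ b, p ∣ d, p² ∤ d. Then there exist integers y₂, y₃ such that d ≡ −b·y₂² − a·b·y₃² (mod p²), and at least one of y₂, y₃ is not divisible by p. -/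
open Polynomial

/-- For an odd prime `p` and `α ≠ 0` in `ZMod p`, every element is of the form
`u ^ 2 + α * v ^ 2`. -/
lemma sq_add_mul_sq (p : ℕ) [hp : Fact p.Prime] (hodd : Odd p) (α c : ZMod p)
    (hα : α ≠ 0) : ∃ u v : ZMod p, u ^ 2 + α * v ^ 2 = c := by
  have hp_odd : p % 2 = 1 := Nat.odd_iff.mp hodd
  let f : (ZMod p)[X] := X ^ 2
  let g : (ZMod p)[X] := C α * X ^ 2 + C 0 * X + C (-c)
  obtain ⟨u, v, huv⟩ : ∃ u v, f.eval u + g.eval v = 0 :=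
    FiniteField.exists_root_sum_quadratic (degree_X_pow 2) (degree_quadratic hα)
      (by rw [ZMod.card, hp_odd])
  refine ⟨u, v, ?_⟩
  simp only [f, g, eval_add, eval_mul, eval_pow, eval_C, eval_X] at huv
  linear_combination huv

theorem stmt_2 (p : ℕ) (hp : p.Prime) (hodd : Odd p) (a b d : ℤ)
    (ha : ¬ (p : ℤ) ∣ a) (hb : (p : ℤ) ∣ b) (hb2 : ¬ ((p : ℤ) ^ 2 ∣ b))
    (hd : (p : ℤ) ∣ d) (hd2 : ¬ ((p : ℤ) ^ 2 ∣ d)) :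
    ∃ y₂ y₃ : ℤ, d ≡ -b * y₂ ^ 2 - a * b * y₃ ^ 2 [ZMOD (p : ℤ) ^ 2] ∧
      (¬ (p : ℤ) ∣ y₂ ∨ ¬ (p : ℤ) ∣ y₃) := by
  haveI : Fact p.Prime := ⟨hp⟩
  obtain ⟨b', rfl⟩ := hb
  obtain ⟨d', rfl⟩ := hd
  have hpz : (p : ℤ) ≠ 0 := by exact_mod_cast hp.ne_zero
  have hb' : ¬ (p : ℤ) ∣ b' := fun ⟨k, hk⟩ => hb2 ⟨k, by rw [hk]; ring⟩
  have hd' : ¬ (p : ℤ) ∣ d' := fun ⟨k, hk⟩ => hd2 ⟨k, by rw [hk]; ring⟩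
  -- pass to ZMod p
  have hαz : (a : ZMod p) ≠ 0 := by
    rwa [Ne, ZMod.intCast_zmod_eq_zero_iff_dvd]
  have hβz : (b' : ZMod p) ≠ 0 := by
    rwa [Ne, ZMod.intCast_zmod_eq_zero_iff_dvd]
  have hδz : (d' : ZMod p) ≠ 0 := by
    rwa [Ne, ZMod.intCast_zmod_eq_zero_iff_dvd]
  obtain ⟨u, v, huv⟩ := sq_add_mul_sq p hodd (a : ZMod p)
    (-(d' : ZMod p) * (b' : ZMod p)⁻¹) hαz
  refine ⟨(u.val : ℤ), (v.val : ℤ), ?_, ?_⟩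
  · have key : (p : ℤ) ∣ (d' + b' * (u.val : ℤ) ^ 2 + a * b' * (v.val : ℤ) ^ 2) := by
      rw [← ZMod.intCast_zmod_eq_zero_iff_dvd]
      push_cast
      rw [ZMod.natCast_val, ZMod.natCast_val, ZMod.cast_id, ZMod.cast_id]
      have hkey : (b' : ZMod p) * (u ^ 2 + (a : ZMod p) * v ^ 2) = -(d' : ZMod p) := by
        rw [huv]; field_simp
      linear_combination hkey
    obtain ⟨k, hk⟩ := key
    rw [Int.ModEq]
    have : -((p:ℤ) * b') * (u.val : ℤ) ^ 2 - a * ((p:ℤ) * b') * (v.val : ℤ) ^ 2 =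
        (p:ℤ) * d' + (p:ℤ)^2 * (-k) := by
      have : (b' : ℤ) * (u.val : ℤ) ^ 2 + a * b' * (v.val : ℤ) ^ 2 = (p:ℤ) * k - d' := by
        linarith [hk]
      nlinarith [this]
    rw [this, Int.add_mul_emod_self_left]
  · by_contra hcon
    push_neg at hcon
    obtain ⟨h2, h3⟩ := hcon
    have hu : u = 0 := by
      have := (ZMod.intCast_zmod_eq_zero_iff_dvd (u.val : ℤ) p).mpr h2
      rwa [Int.cast_natCast, ZMod.natCast_val, ZMod.cast_id] at this
    have hv : v = 0 := by
      have := (ZMod.intCast_zmod_eq_zero_iff_dvd (v.val : ℤ) p).mpr h3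
      rwa [Int.cast_natCast, ZMod.natCast_val, ZMod.cast_id] at this
    apply hδz
    rw [hu, hv] at huv
    have : -(d' : ZMod p) * (b' : ZMod p)⁻¹ = 0 := by linear_combination -huv
    rcases mul_eq_zero.mp this with h | h
    · exact neg_eq_zero.mp h
    · exact absurd h (inv_ne_zero hβz)
end

section
/- Let a and b be odd square-free positive integers and let d be an integer with d ≢ 0 (mod 4). Then there exist integers x₀, y₁, y₂, y₃ with gcd(x₀,y₁,y₂,y₃) = 1 such that x₀² − a·y₁² − b·y₂² − a·b·y₃² ≡ d (mod 16). -/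
set_option maxRecDepth 10000 in
set_option synthInstance.maxHeartbeats 1000000 in
set_option synthInstance.maxSize 2000 in
lemma key16 : ∀ a b d : ZMod 16, ¬ (∃ c, a = 2*c) → ¬ (∃ c, b = 2*c) → ¬ (∃ c, d = 4*c) →
    ∃ x y1 y2 y3 : Fin 4,
      ((x.val : ℤ) = 1 ∨ (y1.val : ℤ) = 1 ∨ (y2.val : ℤ) = 1 ∨ (y3.val : ℤ) = 1) ∧
      ((x.val : ZMod 16)^2 - a*(y1.val : ZMod 16)^2 - b*(y2.val : ZMod 16)^2
        - a*b*(y3.val : ZMod 16)^2 = d) := by decide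

lemma not_mul_zmod16 (k : ℤ) (hk : k ∣ (16:ℤ)) (d : ℤ) (hd : ¬ k ∣ d) :
    ¬ (∃ c : ZMod 16, (d : ZMod 16) = (k : ZMod 16) * c) := by
  rintro ⟨c, hc⟩
  apply hd
  have h1 : ((d - k * (c.val : ℤ) : ℤ) : ZMod 16) = 0 := by
    push_cast
    rw [ZMod.natCast_val, ZMod.cast_id, hc]
    ring
  have h2 : (16 : ℤ) ∣ d - k * (c.val : ℤ) :=
    (ZMod.intCast_zmod_eq_zero_iff_dvd _ 16).mp h1
  have h3 : k ∣ d - k * (c.val : ℤ) := dvd_trans hk h2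
  have := dvd_add h3 (Dvd.intro _ rfl : k ∣ k * (c.val : ℤ))
  simpa using this

theorem stmt_5 (a b : ℤ) (ha : Squarefree a) (hb : Squarefree b)
    (hapos : 0 < a) (hbpos : 0 < b) (haodd : Odd a) (hbodd : Odd b)
    (d : ℤ) (hd : ¬ (4 : ℤ) ∣ d) :
    ∃ x₀ y₁ y₂ y₃ : ℤ, Int.gcd x₀ (Int.gcd y₁ (Int.gcd y₂ y₃)) = 1 ∧
      x₀ ^ 2 - a * y₁ ^ 2 - b * y₂ ^ 2 - a * b * y₃ ^ 2 ≡ d [ZMOD 16] := by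
  have ha2 : ¬ (2:ℤ) ∣ a := fun h => (Int.not_even_iff_odd.mpr haodd) (even_iff_two_dvd.mpr h)
  have hb2 : ¬ (2:ℤ) ∣ b := fun h => (Int.not_even_iff_odd.mpr hbodd) (even_iff_two_dvd.mpr h)
  have hA := not_mul_zmod16 2 (by norm_num) a ha2
  have hB := not_mul_zmod16 2 (by norm_num) b hb2
  have hD := not_mul_zmod16 4 (by norm_num) d hd
  obtain ⟨x, y1, y2, y3, h1, h2⟩ := key16 (a : ZMod 16) (b : ZMod 16) (d : ZMod 16)
    (by exact_mod_cast hA) (by exact_mod_cast hB) (by exact_mod_cast hD)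
  refine ⟨(x.val : ℤ), (y1.val : ℤ), (y2.val : ℤ), (y3.val : ℤ), ?_, ?_⟩
  · rcases h1 with h | h | h | h <;> simp [h, Int.gcd]
  · have : (((x.val : ℤ) ^ 2 - a * (y1.val : ℤ) ^ 2 - b * (y2.val : ℤ) ^ 2
        - a * b * (y3.val : ℤ) ^ 2 : ℤ) : ZMod 16) = ((d : ℤ) : ZMod 16) := by
      push_cast
      rw [← h2]
    exact (ZMod.intCast_eq_intCast_iff _ _ _).mp this
end

section
/- Let a be an odd square-free positive integer, let b be a square-free positive integer with b ≡ 2 (mod 4), and let d be an integer with d ≢ 0 (mod 4). Then there exist integers x₀, y₁, y₂, y₃ with gcd(x₀,y₁,y₂,y₃) = 1 such that x₀² − a·y₁² − b·y₂² − a·b·y₃² ≡ d (mod 64). -/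
set_option maxRecDepth 40000

lemma br8 : ∀ s : ZMod 64, (ZMod.castHom (by norm_num : (8:ℕ) ∣ 64) (ZMod 8) s).val = s.val % 8 := by decide
lemma br16 : ∀ s : ZMod 64, (ZMod.castHom (by norm_num : (16:ℕ) ∣ 64) (ZMod 16) s).val = s.val % 16 := by decide

lemma sel_odd8 : ∀ A B D : ZMod 8, A.val % 2 = 1 → B.val % 4 = 2 → D.val % 2 = 1 →
    D + 4*B = 1 ∨ D + 4*A = 1 ∨ D + B = 1 ∨ D + 4*A + B = 1 := by decide

lemma sel_even16 : ∀ A B D : ZMod 16, A.val % 2 = 1 → B.val % 4 = 2 → D.val % 4 = 2 →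
    4 - D = B ∨ -(4*A) - D = B ∨ -(4*(A*B)) - D = B ∨ 4 - 4*A - D = B ∨
    4 - 4*(A*B) - D = B ∨ -(4*A) - 4*(A*B) - D = B ∨ 4 - 4*A - 4*(A*B) - D = B := by decide

lemma sq_lift : ∀ s : ZMod 64, s.val % 8 = 1 → ∃ t : ZMod 64, t.val % 2 = 1 ∧ t^2 = s := by decide
lemma two_lift : ∀ B C : ZMod 64, B.val % 4 = 2 → C.val % 16 = B.val % 16 →
    ∃ t : ZMod 64, t.val % 2 = 1 ∧ B * t^2 = C := by decide

lemma gcd2 (m : ℕ) (h : m % 2 = 1) : Nat.gcd 2 m = 1 := by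
  rw [Nat.gcd_rec]; simp [h]

lemma gcd2' (m : ℕ) (h : m % 2 = 1) : Nat.gcd m 2 = 1 := by
  rw [Nat.gcd_comm]; exact gcd2 m h

lemma val2 : (2 : ZMod 64).val = 2 := rfl
lemma val1 : (1 : ZMod 64).val = 1 := rfl
lemma val0 : (0 : ZMod 64).val = 0 := rfl

lemma main_zmod (A B D : ZMod 64) (hA : A.val % 2 = 1) (hB : B.val % 4 = 2)
    (hD : D.val % 4 ≠ 0) :
    ∃ x y z w : ZMod 64, Nat.gcd x.val (Nat.gcd y.val (Nat.gcd z.val w.val)) = 1 ∧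
      x^2 - A*y^2 - B*z^2 - A*B*w^2 = D := by
  set f8 := ZMod.castHom (by norm_num : (8:ℕ) ∣ 64) (ZMod 8) with hf8
  set f16 := ZMod.castHom (by norm_num : (16:ℕ) ∣ 64) (ZMod 16) with hf16
  by_cases hDo : D.val % 2 = 1
  · have hA8 : (f8 A).val % 2 = 1 := by rw [br8]; omega
    have hB8 : (f8 B).val % 4 = 2 := by rw [br8]; omega
    have hD8 : (f8 D).val % 2 = 1 := by rw [br8]; omega
    have key : ∀ s : ZMod 64, f8 s = 1 → s.val % 8 = 1 := by
      intro s hs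
      have := br8 s
      rw [hs] at this
      exact this.symm
    rcases sel_odd8 (f8 A) (f8 B) (f8 D) hA8 hB8 hD8 with h | h | h | h
    · obtain ⟨t, ht, hts⟩ := sq_lift (D + 4*B)
        (key _ (by simp only [map_add, map_mul, map_ofNat]; exact h))
      exact ⟨t, 0, 2, 0, by simp [val2, val0, gcd2' t.val ht], by rw [hts]; ring⟩
    · obtain ⟨t, ht, hts⟩ := sq_lift (D + 4*A)
        (key _ (by simp only [map_add, map_mul, map_ofNat]; exact h))
      exact ⟨t, 2, 0, 0, by simp [val2, val0, gcd2' t.val ht], by rw [hts]; ring⟩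
    · obtain ⟨t, ht, hts⟩ := sq_lift (D + B)
        (key _ (by simp only [map_add]; exact h))
      exact ⟨t, 0, 1, 0, by simp [val1, val0], by rw [hts]; ring⟩
    · obtain ⟨t, ht, hts⟩ := sq_lift (D + 4*A + B)
        (key _ (by simp only [map_add, map_mul, map_ofNat]; exact h))
      exact ⟨t, 2, 1, 0, by simp [val2, val1, val0], by rw [hts]; ring⟩
  · have hD4 : D.val % 4 = 2 := by omega
    have hA16 : (f16 A).val % 2 = 1 := by rw [br16]; omega
    have hB16 : (f16 B).val % 4 = 2 := by rw [br16]; omega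
    have hD16 : (f16 D).val % 4 = 2 := by rw [br16]; omega
    have key : ∀ C : ZMod 64, f16 C = f16 B → C.val % 16 = B.val % 16 := by
      intro C hC
      rw [← br16, ← br16, hC]
    rcases sel_even16 (f16 A) (f16 B) (f16 D) hA16 hB16 hD16 with h | h | h | h | h | h | h
    · obtain ⟨t, ht, hts⟩ := two_lift B (4 - D) hB
        (key _ (by simp only [map_sub, map_ofNat]; exact h))
      exact ⟨2, 0, t, 0, by simp [val2, val0, gcd2 t.val ht], by linear_combination -hts⟩
    · obtain ⟨t, ht, hts⟩ := two_lift B (-(4*A) - D) hB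
        (key _ (by simp only [map_sub, map_neg, map_mul, map_ofNat]; exact h))
      exact ⟨0, 2, t, 0, by simp [val2, val0, gcd2 t.val ht], by linear_combination -hts⟩
    · obtain ⟨t, ht, hts⟩ := two_lift B (-(4*(A*B)) - D) hB
        (key _ (by simp only [map_sub, map_neg, map_mul, map_ofNat]; exact h))
      exact ⟨0, 0, t, 2, by simp [val2, val0, gcd2' t.val ht], by linear_combination -hts⟩
    · obtain ⟨t, ht, hts⟩ := two_lift B (4 - 4*A - D) hB
        (key _ (by simp only [map_sub, map_mul, map_ofNat]; exact h))
      exact ⟨2, 2, t, 0, by simp [val2, val0, gcd2 t.val ht], by linear_combination -hts⟩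
    · obtain ⟨t, ht, hts⟩ := two_lift B (4 - 4*(A*B) - D) hB
        (key _ (by simp only [map_sub, map_mul, map_ofNat]; exact h))
      exact ⟨2, 0, t, 2, by simp [val2, val0, gcd2' t.val ht], by linear_combination -hts⟩
    · obtain ⟨t, ht, hts⟩ := two_lift B (-(4*A) - 4*(A*B) - D) hB
        (key _ (by simp only [map_sub, map_neg, map_mul, map_ofNat]; exact h))
      exact ⟨0, 2, t, 2, by simp [val2, val0, gcd2' t.val ht], by linear_combination -hts⟩
    · obtain ⟨t, ht, hts⟩ := two_lift B (4 - 4*A - 4*(A*B) - D) hB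
        (key _ (by simp only [map_sub, map_mul, map_ofNat]; exact h))
      exact ⟨2, 2, t, 2, by simp [val2, val0, gcd2' t.val ht], by linear_combination -hts⟩

theorem stmt_6 (a b : ℤ) (ha : Squarefree a) (hb : Squarefree b)
    (hapos : 0 < a) (hbpos : 0 < b) (haodd : Odd a) (hb2 : b ≡ 2 [ZMOD 4])
    (d : ℤ) (hd : ¬ (4 : ℤ) ∣ d) :
    ∃ x₀ y₁ y₂ y₃ : ℤ, Int.gcd x₀ (Int.gcd y₁ (Int.gcd y₂ y₃)) = 1 ∧
      x₀ ^ 2 - a * y₁ ^ 2 - b * y₂ ^ 2 - a * b * y₃ ^ 2 ≡ d [ZMOD 64] := by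
  have ha2 : a % 2 = 1 := Int.odd_iff.mp haodd
  have hb4 : b % 4 = 2 := by have := hb2; unfold Int.ModEq at this; omega
  have hd4 : d % 4 ≠ 0 := by omega
  have hvA : ((a : ZMod 64).val : ℤ) = a % 64 := ZMod.val_intCast a
  have hvB : ((b : ZMod 64).val : ℤ) = b % 64 := ZMod.val_intCast b
  have hvD : ((d : ZMod 64).val : ℤ) = d % 64 := ZMod.val_intCast d
  have hA : (a : ZMod 64).val % 2 = 1 := by omega
  have hB : (b : ZMod 64).val % 4 = 2 := by omega
  have hD : (d : ZMod 64).val % 4 ≠ 0 := by omega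
  obtain ⟨x, y, z, w, hg, he⟩ := main_zmod _ _ _ hA hB hD
  refine ⟨(x.val : ℤ), (y.val : ℤ), (z.val : ℤ), (w.val : ℤ), ?_, ?_⟩
  · simpa [Int.gcd, -ZMod.natCast_val] using hg
  · have : (((x.val : ℤ) ^ 2 - a * (y.val : ℤ) ^ 2 - b * (z.val : ℤ) ^ 2
        - a * b * (w.val : ℤ) ^ 2 : ℤ) : ZMod 64) = ((d : ℤ) : ZMod 64) := by
      push_cast
      simpa [ZMod.natCast_val, ZMod.cast_id] using he
    exact (ZMod.intCast_eq_intCast_iff _ _ _).mp this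
end

section
/- Let a and b be square-free positive integers with a ≡ b ≡ 2 (mod 4) and gcd(a,b) = 2, and let d be an integer with d ≢ 0 (mod 4). Then there exist integers x₀, y₁, y₂, y₃ with gcd(x₀,y₁,y₂,y₃) = 1 such that x₀² − a·y₁² − b·y₂² − a·b·y₃² ≡ d (mod 256). -/
set_option linter.unreachableTactic false
set_option linter.unusedTactic false

set_option maxRecDepth 100000 in
lemma sq256 : ∀ k : Fin 32, ∃ j : Fin 128, ((2*j.val+1)^2) % 256 = 8*k.val+1 := by decide

set_option maxRecDepth 100000 in
lemma sq128 : ∀ i : Fin 64, ∀ k : Fin 16, ∃ j : Fin 32,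
    ((2*i.val+1) * (2*j.val+1)^2) % 128 = (2*i.val+1+8*k.val) % 128 := by decide

lemma lemA (t : ℤ) (ht : t % 8 = 1) : ∃ x : ℤ, x % 2 = 1 ∧ x ^ 2 ≡ t [ZMOD 256] := by
  set K : ℕ := ((t % 256) / 8).toNat with hKdef
  have hK' : t % 256 = 8 * (K : ℤ) + 1 ∧ K < 32 := by omega
  obtain ⟨j, hj⟩ := sq256 ⟨K, hK'.2⟩
  have hj0 : ((2*j.val+1)^2) % 256 = 8*K+1 := hj
  have hj' : (2 * (j.val : ℤ) + 1) ^ 2 % 256 = 8 * (K : ℤ) + 1 := by exact_mod_cast hj0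
  refine ⟨2 * (j.val : ℤ) + 1, by omega, ?_⟩
  show (2 * (j.val : ℤ) + 1) ^ 2 % 256 = t % 256
  omega

lemma lemB (a u : ℤ) (ha : a % 2 = 1) (hu : u % 8 = a % 8) :
    ∃ y : ℤ, y % 2 = 1 ∧ a * y ^ 2 ≡ u [ZMOD 128] := by
  set I : ℕ := ((a % 128) / 2).toNat with hIdef
  have hI : a % 128 = 2 * (I : ℤ) + 1 ∧ I < 64 := by omega
  set K : ℕ := (((u - a) % 128) / 8).toNat with hKdef
  have h8 : (u - a) % 8 = 0 := by omega
  have hK : (u - a) % 128 = 8 * (K : ℤ) ∧ K < 16 := by omega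
  obtain ⟨j, hj⟩ := sq128 ⟨I, hI.2⟩ ⟨K, hK.2⟩
  have hj0 : ((2*I+1) * (2*j.val+1)^2) % 128 = (2*I+1+8*K) % 128 := hj
  set y : ℤ := 2 * (j.val : ℤ) + 1 with hydef
  have hj' : ((2 * (I : ℤ) + 1) * y ^ 2) % 128 = (2 * (I : ℤ) + 1 + 8 * (K : ℤ)) % 128 := by
    rw [hydef]; exact_mod_cast hj0
  refine ⟨y, by omega, ?_⟩
  have h1 : a * y ^ 2 % 128 = (a % 128) * y ^ 2 % 128 := by
    conv_lhs => rw [Int.mul_emod, ← Int.emod_emod_of_dvd a (by norm_num : (128:ℤ) ∣ 128)]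
    rw [← Int.mul_emod]
  show a * y ^ 2 % 128 = u % 128
  rw [h1, hI.1]
  omega

lemma choose3 (a b v d : ℤ) (ha : a % 8 = 2 ∨ a % 8 = 6) (hb : b % 8 = 2 ∨ b % 8 = 6)
    (hv : v % 8 = 4) (hd : d % 2 = 1) :
    ∃ e₁ e₂ e₃ : ℤ, (e₁ = 0 ∨ e₁ = 1) ∧ (e₂ = 0 ∨ e₂ = 1) ∧ (e₃ = 1 ∨ e₃ = 4) ∧
      (d + a * e₁ + b * e₂ + v * e₃) % 8 = 1 := by
  have hd8 : d % 8 = 1 ∨ d % 8 = 3 ∨ d % 8 = 5 ∨ d % 8 = 7 := by omega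
  rcases ha with ha | ha <;> rcases hb with hb | hb <;> rcases hd8 with h | h | h | h <;>
    first
      | exact ⟨0, 0, 4, Or.inl rfl, Or.inl rfl, Or.inr rfl, by omega⟩
      | exact ⟨1, 0, 4, Or.inr rfl, Or.inl rfl, Or.inr rfl, by omega⟩
      | exact ⟨0, 1, 4, Or.inl rfl, Or.inr rfl, Or.inr rfl, by omega⟩
      | exact ⟨1, 1, 4, Or.inr rfl, Or.inr rfl, Or.inr rfl, by omega⟩
      | exact ⟨0, 0, 1, Or.inl rfl, Or.inl rfl, Or.inl rfl, by omega⟩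
      | exact ⟨1, 0, 1, Or.inr rfl, Or.inl rfl, Or.inl rfl, by omega⟩
      | exact ⟨0, 1, 1, Or.inl rfl, Or.inr rfl, Or.inl rfl, by omega⟩
      | exact ⟨1, 1, 1, Or.inr rfl, Or.inr rfl, Or.inl rfl, by omega⟩

lemma gcd_helper (g : ℕ) (x w : ℤ) (hx : x % 2 = 1) (hw : w = 1 ∨ w = 2 ∨ w = 4)
    (h1 : (g : ℤ) ∣ x) (h2 : (g : ℤ) ∣ w) : g = 1 := by
  have hg4 : (g : ℤ) ∣ 4 := h2.trans (by rcases hw with h | h | h <;> rw [h] <;> norm_num)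
  have hg4' : g ∣ 4 := by exact_mod_cast hg4
  have hle := Nat.le_of_dvd (by norm_num) hg4'
  interval_cases g
  · exfalso; rw [Int.natCast_zero, zero_dvd_iff] at h1; omega
  · rfl
  · exfalso
    have : (2 : ℤ) ∣ x := by exact_mod_cast h1
    omega
  · exfalso; revert hg4'; decide
  · exfalso
    have h4 : (4 : ℤ) ∣ x := by exact_mod_cast h1
    omega

theorem stmt_7 (a b : ℤ) (ha : Squarefree a) (hb : Squarefree b)
    (hapos : 0 < a) (hbpos : 0 < b) (ha2 : a ≡ 2 [ZMOD 4]) (hb2 : b ≡ 2 [ZMOD 4])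
    (hgcd : Int.gcd a b = 2)
    (d : ℤ) (hd : ¬ (4 : ℤ) ∣ d) :
    ∃ x₀ y₁ y₂ y₃ : ℤ, Int.gcd x₀ (Int.gcd y₁ (Int.gcd y₂ y₃)) = 1 ∧
      x₀ ^ 2 - a * y₁ ^ 2 - b * y₂ ^ 2 - a * b * y₃ ^ 2 ≡ d [ZMOD 256] := by
  have ha4 : a % 4 = 2 := by have h : a % 4 = 2 % 4 := ha2; omega
  have hb4 : b % 4 = 2 := by have h : b % 4 = 2 % 4 := hb2; omega
  obtain ⟨a₁, rfl⟩ : ∃ k, a = 2 * k := ⟨a / 2, by omega⟩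
  obtain ⟨b₁, rfl⟩ : ∃ k, b = 2 * k := ⟨b / 2, by omega⟩
  have ha₁ : a₁ % 2 = 1 := by omega
  have hb₁ : b₁ % 2 = 1 := by omega
  rcases (show d % 2 = 1 ∨ d % 2 = 0 by omega) with hdodd | hdeven
  · -- odd d
    have ha8 : (2 * a₁) % 8 = 2 ∨ (2 * a₁) % 8 = 6 := by omega
    have hb8 : (2 * b₁) % 8 = 2 ∨ (2 * b₁) % 8 = 6 := by omega
    have hab : ((2 * a₁) * (2 * b₁)) % 8 = 4 := by
      obtain ⟨p, hp2, hp⟩ : ∃ p, p % 2 = 1 ∧ (2 * a₁) * (2 * b₁) = 4 * p :=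
        ⟨a₁ * b₁, by rw [Int.mul_emod, ha₁, hb₁]; norm_num, by ring⟩
      rw [hp]; omega
    obtain ⟨e₁, e₂, e₃, he₁, he₂, he₃, ht⟩ :=
      choose3 (2 * a₁) (2 * b₁) ((2 * a₁) * (2 * b₁)) d ha8 hb8 hab hdodd
    obtain ⟨x, hxodd, hx⟩ :=
      lemA (d + (2 * a₁) * e₁ + (2 * b₁) * e₂ + ((2 * a₁) * (2 * b₁)) * e₃) ht
    obtain ⟨y₃, hy₃sq, hy₃v⟩ : ∃ y₃ : ℤ, y₃ ^ 2 = e₃ ∧ (y₃ = 1 ∨ y₃ = 2) := by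
      rcases he₃ with h | h
      · exact ⟨1, by rw [h]; norm_num, Or.inl rfl⟩
      · exact ⟨2, by rw [h]; norm_num, Or.inr rfl⟩
    refine ⟨x, e₁, e₂, y₃, ?_, ?_⟩
    · refine gcd_helper _ x y₃ hxodd (by rcases hy₃v with h | h <;> rw [h] <;> norm_num)
        (Int.gcd_dvd_left _ _) ?_
      exact dvd_trans (Int.gcd_dvd_right _ _) (dvd_trans (Int.gcd_dvd_right _ _) (Int.gcd_dvd_right _ _))
    · have hsq1 : e₁ ^ 2 = e₁ := by rcases he₁ with h | h <;> rw [h] <;> norm_num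
      have hsq2 : e₂ ^ 2 = e₂ := by rcases he₂ with h | h <;> rw [h] <;> norm_num
      obtain ⟨k, hk⟩ := Int.ModEq.dvd hx
      refine Int.modEq_iff_dvd.mpr ⟨k, ?_⟩
      linear_combination hk + (2 * a₁) * hsq1 + (2 * b₁) * hsq2 +
        ((2 * a₁) * (2 * b₁)) * hy₃sq
  · -- even d
    obtain ⟨e, rfl⟩ : ∃ k, d = 2 * k := ⟨d / 2, by omega⟩
    have he : e % 2 = 1 := by omega
    obtain ⟨x', y₂, hx', hy₂, hu⟩ : ∃ x' y₂ : ℤ, (x' = 1 ∨ x' = 2) ∧ (y₂ = 0 ∨ y₂ = 2) ∧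
        (2 * x' ^ 2 - b₁ * y₂ ^ 2 - e) % 8 = a₁ % 8 := by
      rcases (show (a₁ + e) % 8 = 0 ∨ (a₁ + e) % 8 = 2 ∨ (a₁ + e) % 8 = 4 ∨
          (a₁ + e) % 8 = 6 by omega) with h | h | h | h
      · exact ⟨2, 0, Or.inr rfl, Or.inl rfl, by norm_num; omega⟩
      · exact ⟨1, 0, Or.inl rfl, Or.inl rfl, by norm_num; omega⟩
      · exact ⟨2, 2, Or.inr rfl, Or.inr rfl, by norm_num; omega⟩
      · exact ⟨1, 2, Or.inl rfl, Or.inr rfl, by norm_num; omega⟩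
    obtain ⟨y, hyodd, hy⟩ := lemB a₁ (2 * x' ^ 2 - b₁ * y₂ ^ 2 - e) ha₁ hu
    refine ⟨2 * x', y, y₂, 0, ?_, ?_⟩
    · refine gcd_helper _ y (2 * x') hyodd
        (by rcases hx' with h | h <;> rw [h] <;> norm_num) ?_ (Int.gcd_dvd_left _ _)
      exact dvd_trans (Int.gcd_dvd_right _ _) (Int.gcd_dvd_left _ _)
    · obtain ⟨k, hk⟩ := Int.ModEq.dvd hy
      refine Int.modEq_iff_dvd.mpr ⟨-k, ?_⟩
      linear_combination -2 * hk
end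

section
/- Let a, b, c be integers, m and n coprime positive integers, and let f(x₀,y₁,y₂,y₃) = x₀² − a·y₁² − b·y₂² − a·b·y₃². Suppose there exist integers α₀,α₁,α₂,α₃ with gcd(α₀,α₁,α₂,α₃) = 1 and f(α₀,α₁,α₂,α₃) ≡ c (mod m), and integers β₀,β₁,β₂,β₃ with gcd(β₀,β₁,β₂,β₃) = 1 and f(β₀,β₁,β₂,β₃) ≡ c (mod n). Then there exist integers γ₀,γ₁,γ₂,γ₃ with gcd(γ₀,γ₁,γ₂,γ₃) = 1 and f(γ₀,γ₁,γ₂,γ₃) ≡ c (mod mn). -/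
/-- Key arithmetic lemma: if `gcd(x, e)` is coprime to `M` and `e ≠ 0`, then some shift
`x + M * t` is coprime to `e`. -/
lemma key_shift (x M e : ℤ) (he : e ≠ 0) (h : IsCoprime (Int.gcd x e : ℤ) M) :
    ∃ t : ℤ, Int.gcd (x + M * t) e = 1 := by
  classical
  set ps : Finset ℕ := e.natAbs.primeFactors.filter (fun p : ℕ => ¬ (p : ℤ) ∣ x) with hps
  refine ⟨(ps.prod (fun p => (p : ℤ))), ?_⟩
  have : Nat.Coprime (x + M * ps.prod (fun p => (p : ℤ))).natAbs e.natAbs := by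
    apply Nat.coprime_of_dvd'
    intro p pp hp1 hp2
    exfalso
    have hpe : (p : ℤ) ∣ e := Int.natCast_dvd.mpr hp2
    have hpsum : (p : ℤ) ∣ x + M * ps.prod (fun p => (p : ℤ)) := Int.natCast_dvd.mpr hp1
    have hpZ : Prime (p : ℤ) := Nat.prime_iff_prime_int.mp pp
    by_cases hpx : (p : ℤ) ∣ x
    · have hMt : (p : ℤ) ∣ M * ps.prod (fun p => (p : ℤ)) := by
        have := dvd_sub hpsum hpx
        simpa using this
      rcases hpZ.dvd_mul.mp hMt with hM | ht
      · -- p divides gcd(x,e) and M: contradicts coprimality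
        have hpg : (p : ℤ) ∣ (Int.gcd x e : ℤ) := Int.dvd_coe_gcd hpx hpe
        have := h.isUnit_of_dvd' hpg hM
        rw [Int.isUnit_iff] at this
        have h2 := pp.two_le
        rcases this with h1 | h1 <;> omega
      · -- p divides the product of primes not dividing x: contradiction
        obtain ⟨q, hq, hq'⟩ := hpZ.dvd_finset_prod_iff _ |>.mp ht
        have hq2 : q ∈ ps := hq
        rw [hps, Finset.mem_filter] at hq2
        have hqp : p = q := by
          have hqprime : q.Prime := Nat.prime_of_mem_primeFactors hq2.1
          have : p ∣ q := Int.natCast_dvd_natCast.mp hq'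
          exact ((Nat.prime_dvd_prime_iff_eq pp hqprime).mp this)
        exact hq2.2 (hqp ▸ hpx)
    · -- p doesn't divide x, so p ∈ ps, so p divides the product, so p ∣ x: contradiction
      have hpps : p ∈ ps := by
        rw [hps, Finset.mem_filter]
        exact ⟨Nat.mem_primeFactors.mpr ⟨pp, hp2, Int.natAbs_ne_zero.mpr he⟩, hpx⟩
      have ht : (p : ℤ) ∣ ps.prod (fun p => (p : ℤ)) :=
        Finset.dvd_prod_of_mem _ hpps
      have : (p : ℤ) ∣ x := by
        have := dvd_sub hpsum (ht.mul_left M)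
        simpa using this
      exact hpx this
  exact this

theorem stmt_8 (a b c : ℤ) (m n : ℤ) (hm : 0 < m) (hn : 0 < n)
    (hmn : IsCoprime m n)
    (α₀ α₁ α₂ α₃ : ℤ) (hαgcd : Int.gcd α₀ (Int.gcd α₁ (Int.gcd α₂ α₃)) = 1)
    (hα : α₀ ^ 2 - a * α₁ ^ 2 - b * α₂ ^ 2 - a * b * α₃ ^ 2 ≡ c [ZMOD m])
    (β₀ β₁ β₂ β₃ : ℤ) (hβgcd : Int.gcd β₀ (Int.gcd β₁ (Int.gcd β₂ β₃)) = 1)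
    (hβ : β₀ ^ 2 - a * β₁ ^ 2 - b * β₂ ^ 2 - a * b * β₃ ^ 2 ≡ c [ZMOD n]) :
    ∃ γ₀ γ₁ γ₂ γ₃ : ℤ, Int.gcd γ₀ (Int.gcd γ₁ (Int.gcd γ₂ γ₃)) = 1 ∧
      γ₀ ^ 2 - a * γ₁ ^ 2 - b * γ₂ ^ 2 - a * b * γ₃ ^ 2 ≡ c [ZMOD m * n] := by
  obtain ⟨u, v, huv⟩ := hmn
  -- CRT construction
  set crt : ℤ → ℤ → ℤ := fun x y => y * (u * m) + x * (v * n) with hcrt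
  have hcrtm : ∀ x y : ℤ, crt x y ≡ x [ZMOD m] := by
    intro x y
    exact Int.modEq_iff_dvd.mpr ⟨(x - y) * u, by simp only [hcrt]; linear_combination (-x) * huv⟩
  have hcrtn : ∀ x y : ℤ, crt x y ≡ y [ZMOD n] := by
    intro x y
    exact Int.modEq_iff_dvd.mpr ⟨(y - x) * v, by simp only [hcrt]; linear_combination (-y) * huv⟩
  set g₀ := crt α₀ β₀ with hg₀
  set g₁ := if crt α₁ β₁ = 0 then m * n else crt α₁ β₁ with hg₁
  set g₂ := crt α₂ β₂ with hg₂
  set g₃ := crt α₃ β₃ with hg₃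
  have hg₁ne : g₁ ≠ 0 := by
    rw [hg₁]; split
    · positivity
    · assumption
  have hg₁m : g₁ ≡ α₁ [ZMOD m] := by
    rw [hg₁]; split
    · rename_i h
      calc m * n ≡ 0 [ZMOD m] := (Int.modEq_iff_dvd.mpr ⟨-n, by ring⟩)
        _ ≡ α₁ [ZMOD m] := h ▸ hcrtm α₁ β₁
    · exact hcrtm α₁ β₁
  have hg₁n : g₁ ≡ β₁ [ZMOD n] := by
    rw [hg₁]; split
    · rename_i h
      calc m * n ≡ 0 [ZMOD n] := (Int.modEq_iff_dvd.mpr ⟨-m, by ring⟩)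
        _ ≡ β₁ [ZMOD n] := h ▸ hcrtn α₁ β₁
    · exact hcrtn α₁ β₁
  -- the inner gcd is nonzero
  set e : ℕ := Int.gcd g₁ (Int.gcd g₂ g₃) with he
  have heZ : (e : ℤ) ≠ 0 := by
    simp only [he, Ne, Nat.cast_eq_zero, Int.gcd_eq_zero_iff]
    tauto
  -- gcd(g₀, e) is coprime to m and to n
  have cop : ∀ (k : ℤ) (δ₀ δ₁ δ₂ δ₃ : ℤ),
      Int.gcd δ₀ (Int.gcd δ₁ (Int.gcd δ₂ δ₃)) = 1 →
      g₀ ≡ δ₀ [ZMOD k] → g₁ ≡ δ₁ [ZMOD k] → g₂ ≡ δ₂ [ZMOD k] → g₃ ≡ δ₃ [ZMOD k] →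
      IsCoprime ((Int.gcd g₀ (e : ℤ) : ℕ) : ℤ) k := by
    intro k δ₀ δ₁ δ₂ δ₃ hδ h0 h1 h2 h3
    rw [Int.isCoprime_iff_gcd_eq_one]
    set d : ℕ := Int.gcd g₀ (e : ℤ) with hd
    set w : ℕ := Int.gcd (d : ℤ) k with hw
    have hwk : (w : ℤ) ∣ k := Int.gcd_dvd_right _ _
    have hwd : (w : ℤ) ∣ (d : ℤ) := Int.gcd_dvd_left _ _
    have hw0 : (w : ℤ) ∣ g₀ := hwd.trans (Int.gcd_dvd_left _ _)
    have hwe : (w : ℤ) ∣ (e : ℤ) := hwd.trans (Int.gcd_dvd_right _ _)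
    have hw1 : (w : ℤ) ∣ g₁ := hwe.trans (Int.gcd_dvd_left _ _)
    have hw2 : (w : ℤ) ∣ g₂ := hwe.trans ((Int.gcd_dvd_right _ _).trans (Int.gcd_dvd_left _ _))
    have hw3 : (w : ℤ) ∣ g₃ := hwe.trans ((Int.gcd_dvd_right _ _).trans (Int.gcd_dvd_right _ _))
    have key : ∀ (x δ : ℤ), x ≡ δ [ZMOD k] → (w : ℤ) ∣ x → (w : ℤ) ∣ δ := by
      intro x δ hxδ hx
      have : k ∣ δ - x := Int.modEq_iff_dvd.mp hxδ
      have : (w : ℤ) ∣ δ - x := hwk.trans this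
      simpa using dvd_add this hx
    have hδdvd : (w : ℤ) ∣ ((Int.gcd δ₀ (Int.gcd δ₁ (Int.gcd δ₂ δ₃)) : ℕ) : ℤ) :=
      Int.dvd_coe_gcd (key _ _ h0 hw0) (Int.dvd_coe_gcd (key _ _ h1 hw1)
        (Int.dvd_coe_gcd (key _ _ h2 hw2) (key _ _ h3 hw3)))
    rw [hδ] at hδdvd
    have : w ∣ 1 := by exact_mod_cast hδdvd
    exact Nat.dvd_one.mp this
  have copm : IsCoprime ((Int.gcd g₀ (e : ℤ) : ℕ) : ℤ) m :=
    cop m α₀ α₁ α₂ α₃ hαgcd (hcrtm α₀ β₀) hg₁m (hcrtm α₂ β₂) (hcrtm α₃ β₃)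
  have copn : IsCoprime ((Int.gcd g₀ (e : ℤ) : ℕ) : ℤ) n :=
    cop n β₀ β₁ β₂ β₃ hβgcd (hcrtn α₀ β₀) hg₁n (hcrtn α₂ β₂) (hcrtn α₃ β₃)
  obtain ⟨t, ht⟩ := key_shift g₀ (m * n) (e : ℤ) heZ (copm.mul_right copn)
  refine ⟨g₀ + m * n * t, g₁, g₂, g₃, ?_, ?_⟩
  · simpa [he] using ht
  · -- congruence
    have hfm : (g₀ + m * n * t) ^ 2 - a * g₁ ^ 2 - b * g₂ ^ 2 - a * b * g₃ ^ 2 ≡ c [ZMOD m] := by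
      have h0 : (g₀ + m * n * t) ≡ α₀ [ZMOD m] := by
        calc (g₀ + m * n * t) ≡ g₀ + 0 [ZMOD m] :=
              (Int.ModEq.refl g₀).add (Int.modEq_iff_dvd.mpr ⟨n * t, by ring⟩).symm
          _ = g₀ := by ring
          _ ≡ α₀ [ZMOD m] := hcrtm α₀ β₀
      exact ((((h0.pow 2).sub ((Int.ModEq.refl a).mul (hg₁m.pow 2))).sub
        ((Int.ModEq.refl b).mul ((hcrtm α₂ β₂).pow 2))).sub
        ((Int.ModEq.refl (a * b)).mul ((hcrtm α₃ β₃).pow 2))).trans hα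
    have hfn : (g₀ + m * n * t) ^ 2 - a * g₁ ^ 2 - b * g₂ ^ 2 - a * b * g₃ ^ 2 ≡ c [ZMOD n] := by
      have h0 : (g₀ + m * n * t) ≡ β₀ [ZMOD n] := by
        calc (g₀ + m * n * t) ≡ g₀ + 0 [ZMOD n] :=
              (Int.ModEq.refl g₀).add (Int.modEq_iff_dvd.mpr ⟨m * t, by ring⟩).symm
          _ = g₀ := by ring
          _ ≡ β₀ [ZMOD n] := hcrtn α₀ β₀
      exact ((((h0.pow 2).sub ((Int.ModEq.refl a).mul (hg₁n.pow 2))).sub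
        ((Int.ModEq.refl b).mul ((hcrtn α₂ β₂).pow 2))).sub
        ((Int.ModEq.refl (a * b)).mul ((hcrtn α₃ β₃).pow 2))).trans hβ
    have hco : m.natAbs.Coprime n.natAbs := by
      have : Int.gcd m n = 1 := Int.isCoprime_iff_gcd_eq_one.mp ⟨u, v, huv⟩
      exact this
    exact (Int.modEq_and_modEq_iff_modEq_mul hco).mp ⟨hfm, hfn⟩
end

section
/- Let a, b be positive integers and LQ_{a,b} the integer quaternion ring with i² = −a, j² = −b, ij = −ji = k. Then the additive subgroup LQ²_{a,b} generated by all squares of elements of LQ_{a,b} equals the set {α₀ + 2α₁·i + 2α₂·j + 2α₃·k : α₀, α₁, α₂, α₃ ∈ ℤ}. -/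
open Quaternion

theorem stmt_15 (a b : ℤ) (ha : 0 < a) (hb : 0 < b) :
    (AddSubgroup.closure {x : ℍ[ℤ, -a, -b] | ∃ y : ℍ[ℤ, -a, -b], x = y ^ 2} :
        Set ℍ[ℤ, -a, -b]) =
      {z : ℍ[ℤ, -a, -b] | ∃ α₀ α₁ α₂ α₃ : ℤ,
        z = ⟨α₀, 2 * α₁, 2 * α₂, 2 * α₃⟩} := by
  set G := AddSubgroup.closure {x : ℍ[ℤ, -a, -b] | ∃ y : ℍ[ℤ, -a, -b], x = y ^ 2} with hG
  ext z
  simp only [SetLike.mem_coe, Set.mem_setOf_eq]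
  constructor
  · intro hz
    induction hz using AddSubgroup.closure_induction with
    | mem x hx =>
      obtain ⟨y, rfl⟩ := hx
      refine ⟨(y^2).re, y.re * y.imI, y.re * y.imJ, y.re * y.imK, ?_⟩
      ext <;>
        simp [sq, QuaternionAlgebra.imI_mul, QuaternionAlgebra.imJ_mul,
          QuaternionAlgebra.imK_mul] <;> ring
    | zero => exact ⟨0, 0, 0, 0, by ext <;> simp⟩
    | add x y hx hy ihx ihy =>
      obtain ⟨p0, p1, p2, p3, rfl⟩ := ihx
      obtain ⟨q0, q1, q2, q3, rfl⟩ := ihy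
      exact ⟨p0 + q0, p1 + q1, p2 + q2, p3 + q3, by ext <;> simp <;> ring⟩
    | neg x hx ihx =>
      obtain ⟨p0, p1, p2, p3, rfl⟩ := ihx
      exact ⟨-p0, -p1, -p2, -p3, by ext <;> simp <;> ring⟩
  · rintro ⟨α₀, α₁, α₂, α₃, rfl⟩
    have h1 : (1 : ℍ[ℤ, -a, -b]) ∈ G :=
      AddSubgroup.subset_closure ⟨1, by norm_num⟩
    have hsq : ∀ y : ℍ[ℤ, -a, -b], y ^ 2 ∈ G :=
      fun y => AddSubgroup.subset_closure ⟨y, rfl⟩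
    have hi : (⟨0, 2, 0, 0⟩ : ℍ[ℤ, -a, -b]) ∈ G := by
      have : (⟨0, 2, 0, 0⟩ : ℍ[ℤ, -a, -b]) =
          (⟨1, 1, 0, 0⟩ : ℍ[ℤ, -a, -b]) ^ 2 + (a - 1) • 1 := by
        ext <;> simp [sq, QuaternionAlgebra.re_mul, QuaternionAlgebra.imI_mul,
          QuaternionAlgebra.imJ_mul, QuaternionAlgebra.imK_mul] <;> ring
      rw [this]
      exact G.add_mem (hsq _) (G.zsmul_mem h1 _)
    have hj : (⟨0, 0, 2, 0⟩ : ℍ[ℤ, -a, -b]) ∈ G := by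
      have : (⟨0, 0, 2, 0⟩ : ℍ[ℤ, -a, -b]) =
          (⟨1, 0, 1, 0⟩ : ℍ[ℤ, -a, -b]) ^ 2 + (b - 1) • 1 := by
        ext <;> simp [sq, QuaternionAlgebra.re_mul, QuaternionAlgebra.imI_mul,
          QuaternionAlgebra.imJ_mul, QuaternionAlgebra.imK_mul] <;> ring
      rw [this]
      exact G.add_mem (hsq _) (G.zsmul_mem h1 _)
    have hk : (⟨0, 0, 0, 2⟩ : ℍ[ℤ, -a, -b]) ∈ G := by
      have : (⟨0, 0, 0, 2⟩ : ℍ[ℤ, -a, -b]) =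
          (⟨1, 0, 0, 1⟩ : ℍ[ℤ, -a, -b]) ^ 2 + (a * b - 1) • 1 := by
        ext <;> simp [sq, QuaternionAlgebra.re_mul, QuaternionAlgebra.imI_mul,
          QuaternionAlgebra.imJ_mul, QuaternionAlgebra.imK_mul] <;> ring
      rw [this]
      exact G.add_mem (hsq _) (G.zsmul_mem h1 _)
    have : (⟨α₀, 2 * α₁, 2 * α₂, 2 * α₃⟩ : ℍ[ℤ, -a, -b]) =
        α₀ • 1 + α₁ • ⟨0, 2, 0, 0⟩ + α₂ • ⟨0, 0, 2, 0⟩ + α₃ • ⟨0, 0, 0, 2⟩ := by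
      ext <;> simp <;> ring
    rw [this]
    exact G.add_mem (G.add_mem (G.add_mem (G.zsmul_mem h1 _) (G.zsmul_mem hi _))
      (G.zsmul_mem hj _)) (G.zsmul_mem hk _)
end

section
/- Let a and b be positive integers and LQ_{a,b} the integer quaternion ring with i² = −a, j² = −b. Then there exists an element of LQ²_{a,b} (the additive group generated by squares) that cannot be written as a sum of two squares of elements of LQ_{a,b}. -/
open Quaternion

private lemma aux2 (a b c N A e k2 k3 : ℤ) (ha : 0 < a) (hb : 0 < b) (hc : 0 ≤ c)
    (hN : 0 ≤ N) (hA : 0 ≤ A)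
    (hNA : N * A = 1 + e ^ 2)
    (hE : c + a * A = N * (1 - b * k2 ^ 2 - a * b * k3 ^ 2)) :
    (c + a * A) * A = 1 + e ^ 2 := by
  have hA1 : 1 ≤ A := by nlinarith [sq_nonneg e]
  have hN1 : 1 ≤ N := by nlinarith [sq_nonneg e]
  have hpos : 0 < c + a * A := by nlinarith
  have hM : 0 < 1 - b * k2 ^ 2 - a * b * k3 ^ 2 := by nlinarith
  have hk2 : k2 ^ 2 = 0 := by nlinarith [sq_nonneg k2, sq_nonneg k3, mul_pos ha hb]
  have hk3 : k3 ^ 2 = 0 := by nlinarith [sq_nonneg k2, sq_nonneg k3, mul_pos ha hb]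
  rw [hk2, hk3] at hE
  have : N = c + a * A := by linarith
  rw [← this]
  exact hNA

private lemma aux1 (a c A e : ℤ) (hc : c = if a % 4 = 1 ∨ a % 4 = 2 then 2 else 0) :
    (c + a * A) * A ≠ 1 + e ^ 2 := by
  intro h
  have h4 : a % 4 = 0 ∨ a % 4 = 1 ∨ a % 4 = 2 ∨ a % 4 = 3 := by omega
  rcases h4 with h4 | h4 | h4 | h4
  · have hc' : c = 0 := by rw [hc, if_neg]; omega
    obtain ⟨m, hm⟩ : ∃ m, a = 4 * m + 0 := ⟨a / 4, by omega⟩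
    rw [hc', hm] at h
    have hcast := congrArg (fun z : ℤ => (z : ZMod 4)) h
    push_cast at hcast
    revert hcast
    generalize (m : ZMod 4) = M
    generalize (A : ZMod 4) = A'
    generalize (e : ZMod 4) = e'
    revert M A' e'
    decide
  · have hc' : c = 2 := by rw [hc, if_pos (Or.inl h4)]
    obtain ⟨m, hm⟩ : ∃ m, a = 4 * m + 1 := ⟨a / 4, by omega⟩
    rw [hc', hm] at h
    have hcast := congrArg (fun z : ℤ => (z : ZMod 4)) h
    push_cast at hcast
    revert hcast
    generalize (m : ZMod 4) = M
    generalize (A : ZMod 4) = A'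
    generalize (e : ZMod 4) = e'
    revert M A' e'
    decide
  · have hc' : c = 2 := by rw [hc, if_pos (Or.inr h4)]
    obtain ⟨m, hm⟩ : ∃ m, a = 4 * m + 2 := ⟨a / 4, by omega⟩
    rw [hc', hm] at h
    have hcast := congrArg (fun z : ℤ => (z : ZMod 4)) h
    push_cast at hcast
    revert hcast
    generalize (m : ZMod 4) = M
    generalize (A : ZMod 4) = A'
    generalize (e : ZMod 4) = e'
    revert M A' e'
    decide
  · have hc' : c = 0 := by rw [hc, if_neg]; omega
    obtain ⟨m, hm⟩ : ∃ m, a = 4 * m + 3 := ⟨a / 4, by omega⟩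
    rw [hc', hm] at h
    have hcast := congrArg (fun z : ℤ => (z : ZMod 4)) h
    push_cast at hcast
    revert hcast
    generalize (m : ZMod 4) = M
    generalize (A : ZMod 4) = A'
    generalize (e : ZMod 4) = e'
    revert M A' e'
    decide

theorem stmt_17 (a b : ℤ) (ha : 0 < a) (hb : 0 < b) :
    ∃ z ∈ AddSubgroup.closure {x : ℍ[ℤ, -a, -b] | ∃ y : ℍ[ℤ, -a, -b], x = y ^ 2},
      ¬ ∃ x y : ℍ[ℤ, -a, -b], z = x ^ 2 + y ^ 2 := by
  set c : ℤ := if a % 4 = 1 ∨ a % 4 = 2 then 2 else 0 with hc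
  have hc0 : 0 ≤ c := by rw [hc]; split <;> norm_num
  refine ⟨⟨c, 2, 0, 0⟩, ?_, ?_⟩
  · have h1 : (⟨1, 1, 0, 0⟩ : ℍ[ℤ, -a, -b]) ^ 2 ∈
        AddSubgroup.closure {x : ℍ[ℤ, -a, -b] | ∃ y : ℍ[ℤ, -a, -b], x = y ^ 2} :=
      AddSubgroup.subset_closure ⟨_, rfl⟩
    have h2 : (1 : ℍ[ℤ, -a, -b]) ∈
        AddSubgroup.closure {x : ℍ[ℤ, -a, -b] | ∃ y : ℍ[ℤ, -a, -b], x = y ^ 2} :=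
      AddSubgroup.subset_closure ⟨1, (one_pow 2).symm⟩
    have h3 := AddSubgroup.add_mem _ h1 (AddSubgroup.zsmul_mem _ h2 (c + a - 1))
    convert h3 using 1
    ext <;> simp [pow_two] <;> ring
  · rintro ⟨⟨t, u1, u2, u3⟩, ⟨s, v1, v2, v3⟩, hz⟩
    have hre := congrArg QuaternionAlgebra.re hz
    have hi := congrArg QuaternionAlgebra.imI hz
    have hj := congrArg QuaternionAlgebra.imJ hz
    have hk := congrArg QuaternionAlgebra.imK hz
    simp [pow_two] at hre hi hj hk
    have h1 : t * u1 + s * v1 = 1 := by linarith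
    have h2 : t * u2 + s * v2 = 0 := by linarith
    have h3 : t * u3 + s * v3 = 0 := by linarith
    obtain ⟨k2, hu2, hv2⟩ : ∃ k, u2 = -s * k ∧ v2 = t * k :=
      ⟨u1 * v2 - v1 * u2, by linear_combination (-u2) * h1 + u1 * h2,
        by linear_combination (-v2) * h1 + v1 * h2⟩
    obtain ⟨k3, hu3, hv3⟩ : ∃ k, u3 = -s * k ∧ v3 = t * k :=
      ⟨u1 * v3 - v1 * u3, by linear_combination (-u3) * h1 + u1 * h3,
        by linear_combination (-v3) * h1 + v1 * h3⟩
    subst hu2 hv2 hu3 hv3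
    have hNA : (t ^ 2 + s ^ 2) * (u1 ^ 2 + v1 ^ 2) = 1 + (t * v1 - s * u1) ^ 2 := by
      linear_combination (t * u1 + s * v1 + 1) * h1
    have hE : c + a * (u1 ^ 2 + v1 ^ 2) =
        (t ^ 2 + s ^ 2) * (1 - b * k2 ^ 2 - a * b * k3 ^ 2) := by
      linear_combination hre
    exact aux1 a c (u1 ^ 2 + v1 ^ 2) (t * v1 - s * u1) hc
      (aux2 a b c (t ^ 2 + s ^ 2) (u1 ^ 2 + v1 ^ 2) (t * v1 - s * u1) k2 k3 ha hb hc0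
        (by positivity) (by positivity) hNA hE)
end
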